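/- Assume p = 3. For integers e, e' ≥ 0 set q = 3^e and q' = 3^{e'}, and define σ_e, τ_{e'} : SL(2,k) → SL(4,k) by σ_e([[a,b],[c,d]]) = [[a^{3q}, b^{3q}, a^{2q}b^{q}, (1/2)a^{q}b^{2q}], [c^{3q}, d^{3q}, c^{2q}d^{q}, (1/2)c^{q}d^{2q}], [0, 0, a^{q}, b^{q}], [0, 0, c^{q}, d^{q}]] and τ_{e'}([[a,b],[c,d]]) = [[a^{q'}, b^{q'}, (1/2)a^{2q'}c^{q'}, (1/2)b^{2q'}d^{q'}], [c^{q'}, d^{q'}, a^{q'}c^{2q'}, b^{q'}d^{2q'}], [0, 0, a^{3q'}, b^{3q'}], [0, 0, c^{3q'}, d^{3q'}]]. Then for all integers e, e' ≥ 0 the homomorphisms σ_e and τ_{e'} are not equivalent: there exists no P ∈ GL(4,k) such that P⁻¹·σ_e(A)·P = τ_{e'}(A) for all A ∈ SL(2,k). -/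

import Mathlib

/-!
On the torus `diag(t, t⁻¹)` the representation `famII` has weights `±3q, ±q` and `famVII` has
weights `±q', ±3q'`. Over an infinite field distinct weights are distinct characters, so an
intertwiner `P` has `P i j = 0` unless the weights of `i` and `j` agree. Nonzero entries in rows
0 and 2 of the invertible `P` force `q = q'`, after which column 0 of `P` is supported on row 2;
the intertwining relation at the unipotent `!![1, 1; 0, 1]` kills that entry as well.
-/

open Matrix

/-- Family (II) (for `p = 3`). -/
noncomputable def famII (k : Type*) [Field k] (q : ℕ)
    (A : SpecialLinearGroup (Fin 2) k) : Matrix (Fin 4) (Fin 4) k :=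
  let a := A.1 0 0
  let b := A.1 0 1
  let c := A.1 1 0
  let d := A.1 1 1
  !![a ^ (3 * q), b ^ (3 * q), a ^ (2 * q) * b ^ q, (1 / 2 : k) * (a ^ q * b ^ (2 * q));
     c ^ (3 * q), d ^ (3 * q), c ^ (2 * q) * d ^ q, (1 / 2 : k) * (c ^ q * d ^ (2 * q));
     0, 0, a ^ q, b ^ q;
     0, 0, c ^ q, d ^ q]

/-- Family (VII) (for `p = 3`). -/
noncomputable def famVII (k : Type*) [Field k] (q : ℕ)
    (A : SpecialLinearGroup (Fin 2) k) : Matrix (Fin 4) (Fin 4) k :=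
  let a := A.1 0 0
  let b := A.1 0 1
  let c := A.1 1 0
  let d := A.1 1 1
  !![a ^ q, b ^ q, (1 / 2 : k) * (a ^ (2 * q) * c ^ q), (1 / 2 : k) * (b ^ (2 * q) * d ^ q);
     c ^ q, d ^ q, a ^ q * c ^ (2 * q), b ^ q * d ^ (2 * q);
     0, 0, a ^ (3 * q), b ^ (3 * q);
     0, 0, c ^ (3 * q), d ^ (3 * q)]


section Characters

variable {k : Type*} [Field k] [Infinite k]

lemma eq_zero_of_forall_pow_eq_one {N : ℕ} (h : ∀ t : k, t ≠ 0 → t ^ N = 1) : N = 0 := by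
  by_contra hN
  apply (Set.finite_singleton (0 : k)).infinite_compl
  refine (Polynomial.nthRoots N (1 : k)).finite_toSet.subset fun t ht => ?_
  simpa [Polynomial.mem_nthRoots (Nat.pos_of_ne_zero hN)] using h t ht

lemma eq_of_forall_zpow_eq {m n : ℤ} (h : ∀ t : k, t ≠ 0 → t ^ m = t ^ n) : m = n := by
  suffices (m - n).natAbs = 0 by omega
  refine eq_zero_of_forall_pow_eq_one (k := k) fun t ht => ?_
  have h1 : Units.mk0 t ht ^ (m - n) = 1 := by
    ext
    simp [zpow_sub₀ ht, h t ht, zpow_ne_zero _ ht]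
  simpa using congrArg Units.val (pow_natAbs_eq_one.mpr h1)

end Characters

section Matrices

variable {n R : Type*} [Fintype n] [DecidableEq n] [CommRing R]

lemma exists_ne_zero_in_row [Nontrivial R] (P : GL n R) (i : n) :
    ∃ j, (P : Matrix n n R) i j ≠ 0 := by
  by_contra! h
  exact P.isUnit.map Matrix.detMonoidHom |>.ne_zero (det_eq_zero_of_row_eq_zero i h)

lemma exists_ne_zero_in_column [Nontrivial R] (P : GL n R) (j : n) :
    ∃ i, (P : Matrix n n R) i j ≠ 0 := by
  by_contra! h
  exact P.isUnit.map Matrix.detMonoidHom |>.ne_zero (det_eq_zero_of_column_eq_zero j h)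

lemma eq_of_diagonal_mul_eq_mul_diagonal [IsDomain R] {d d' : n → R} {P : Matrix n n R}
    (h : diagonal d * P = P * diagonal d') {i j : n} (hP : P i j ≠ 0) : d i = d' j := by
  have := congrFun (congrFun h i) j
  rw [diagonal_mul, mul_diagonal, mul_comm] at this
  exact mul_left_cancel₀ hP this

end Matrices

section Families

variable {k : Type*} [Field k]

def sl2Torus (t : k) (ht : t ≠ 0) : SpecialLinearGroup (Fin 2) k :=
  ⟨!![t, 0; 0, t⁻¹], by simp [det_fin_two_of, mul_inv_cancel₀ ht]⟩

def sl2Unipotent : SpecialLinearGroup (Fin 2) k :=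
  ⟨!![1, 1; 0, 1], by simp [det_fin_two_of]⟩

def weightII (q : ℕ) : Fin 4 → ℤ := ![3 * q, -(3 * q), q, -q]

def weightVII (q : ℕ) : Fin 4 → ℤ := ![q, -q, 3 * q, -(3 * q)]

lemma famII_sl2Torus {q : ℕ} (hq : q ≠ 0) (t : k) (ht : t ≠ 0) :
    famII k q (sl2Torus t ht) = diagonal fun i => t ^ weightII q i := by
  ext i j
  fin_cases i <;> fin_cases j <;>
    simp [famII, sl2Torus, weightII, _root_.zpow_neg, zpow_natCast, inv_pow, hq] <;> norm_cast

lemma famVII_sl2Torus {q : ℕ} (hq : q ≠ 0) (t : k) (ht : t ≠ 0) :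
    famVII k q (sl2Torus t ht) = diagonal fun i => t ^ weightVII q i := by
  ext i j
  fin_cases i <;> fin_cases j <;>
    simp [famVII, sl2Torus, weightVII, _root_.zpow_neg, zpow_natCast, inv_pow, hq] <;> norm_cast

end Families

section Intertwiners

variable {k : Type*} [Field k] {q q' : ℕ} {P : Matrix (Fin 4) (Fin 4) k}

lemma weightII_eq_weightVII_of_ne_zero [Infinite k] (hq : q ≠ 0) (hq' : q' ≠ 0)
    (hP : ∀ A, famII k q A * P = P * famVII k q' A) {i j : Fin 4} (hij : P i j ≠ 0) :
    weightII q i = weightVII q' j :=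
  eq_of_forall_zpow_eq fun t ht => by
    have h := hP (sl2Torus t ht)
    rw [famII_sl2Torus hq, famVII_sl2Torus hq'] at h
    exact eq_of_diagonal_mul_eq_mul_diagonal h hij

lemma apply_two_zero_eq_zero_of_intertwines_unipotent (hq' : q' ≠ 0)
    (hP : famII k q sl2Unipotent * P = P * famVII k q' sl2Unipotent)
    (h₁ : P 1 0 = 0) (h₃ : P 3 0 = 0) : P 2 0 = 0 := by
  have h := congrFun (congrFun hP 0) 0
  simpa [mul_apply, Fin.sum_univ_four, famII, famVII, sl2Unipotent, h₁, h₃, hq'] using h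

end Intertwiners

lemma not_intertwines_famII_famVII {k : Type*} [Field k] [Infinite k] {q q' : ℕ} (hq : q ≠ 0)
    (hq' : q' ≠ 0) (P : GL (Fin 4) k) : ¬∀ A, famII k q A * P = P * famVII k q' A := by
  intro hP
  have hweight {i j} := weightII_eq_weightVII_of_ne_zero hq hq' hP (i := i) (j := j)
  have hqq' : q = q' := by
    obtain ⟨j, hj⟩ := exists_ne_zero_in_row P 0
    obtain ⟨l, hl⟩ := exists_ne_zero_in_row P 2
    have h₀ := hweight hj
    have h₂ := hweight hl
    fin_cases j <;> fin_cases l <;> simp [weightII, weightVII] at h₀ h₂ <;> omega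
  have hcol (i) (hi : i ≠ 2) : (P : Matrix (Fin 4) (Fin 4) k) i 0 = 0 := by
    by_contra h
    have := hweight h
    fin_cases i <;> simp [weightII, weightVII] at hi this <;> omega
  have h₂ := apply_two_zero_eq_zero_of_intertwines_unipotent hq' (hP _)
    (hcol 1 (by decide)) (hcol 3 (by decide))
  obtain ⟨i, hi⟩ := exists_ne_zero_in_column P 0
  by_cases h : i = 2
  · exact hi (h ▸ h₂)
  · exact hi (hcol i h)

theorem stmt17_general {k : Type*} [Field k] [IsAlgClosed k] {p : ℕ} [Fact p.Prime]
    (e e' : ℕ) :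
    ¬∃ P : GL (Fin 4) k, ∀ A : SpecialLinearGroup (Fin 2) k,
      ((P⁻¹ : GL (Fin 4) k) : Matrix (Fin 4) (Fin 4) k) * famII k (p ^ e) A *
          (P : Matrix (Fin 4) (Fin 4) k) =
        famVII k (p ^ e') A := by
  rintro ⟨P, hP⟩
  have hp : p ≠ 0 := (Fact.out : p.Prime).ne_zero
  refine not_intertwines_famII_famVII (pow_ne_zero e hp) (pow_ne_zero e' hp) P fun A => ?_
  rw [← hP, ← mul_assoc, ← mul_assoc, Units.mul_inv, one_mul]

/-- For `p = 3`, the homomorphisms `σ_e` of family (II) and `τ_{e'}` of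
family (VII) are never equivalent, for any `e, e' ≥ 0`. -/
theorem stmt17 {k : Type*} [Field k] [IsAlgClosed k] {p : ℕ} [Fact p.Prime] [CharP k p]
    (hp : p = 3) (e e' : ℕ) :
    ¬∃ P : GL (Fin 4) k, ∀ A : SpecialLinearGroup (Fin 2) k,
      ((P⁻¹ : GL (Fin 4) k) : Matrix (Fin 4) (Fin 4) k) * famII k (p ^ e) A *
          (P : Matrix (Fin 4) (Fin 4) k) =
        famVII k (p ^ e') A :=
  stmt17_general e e'
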